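/- arXiv:2602.08317 — 2 statements merged into one kernel-verified Lean document; each statement's English description precedes it below -/
import Mathlib

section
/- Let i: A → B and p: X → Y be G-maps, and let f: A → X and g: B → Y be G-maps with p ∘ f = g ∘ i. Suppose there exists a G-numerable open cover {U_α}_{α ∈ I} of B such that for every α ∈ I and every subset J ⊆ I, writing W = U_α ∩ (⋃_{β ∈ J} U_β): (existence) there exists a G-map ψ: W → X with p(ψ(w)) = g(w) for all w ∈ W and ψ(i(a)) = f(a) for all a ∈ i⁻¹(W); and (uniqueness up to relative homotopy) for any two such G-maps ψ₁, ψ₂: W → X there is a G-homotopy K: W × I → X from ψ₁ to ψ₂ with p(K(w,t)) = g(w) for all w, t and K(i(a),t) = f(a) for all a ∈ i⁻¹(W) and all t. Then there exists a G-map ψ: B → X with p ∘ ψ = g and ψ ∘ i = f. -/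
open unitInterval Pointwise

noncomputable section

universe u v w x

/-- The trivial action of any group on `Empty`. -/
instance emptySMul (G : Type u) : SMul G Empty := ⟨fun _ e => e⟩

instance emptyMulAction (G : Type u) [Monoid G] : MulAction G Empty where
  one_smul _ := rfl
  mul_smul _ _ _ := rfl

instance emptyContinuousSMul (G : Type u) [Monoid G] [TopologicalSpace G] :
    ContinuousSMul G Empty := ⟨continuous_of_discreteTopology⟩

variable (G : Type u) [Group G]

/-- A continuous `G`-equivariant map of `G`-spaces. -/
def IsGMap {X Y : Type*} [TopologicalSpace X] [TopologicalSpace Y]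
    [MulAction G X] [MulAction G Y] (f : X → Y) : Prop :=
  Continuous f ∧ ∀ (g : G) (x : X), f (g • x) = g • f x

/-- A `G`-homotopy, i.e. a continuous map `X × I → Y` which is equivariant,
where `G` acts trivially on the interval `I`. -/
def IsGHomotopy {X Y : Type*} [TopologicalSpace X] [TopologicalSpace Y]
    [MulAction G X] [MulAction G Y] (K : X × I → Y) : Prop :=
  Continuous K ∧ ∀ (g : G) (x : X) (t : I), K (g • x, t) = g • K (x, t)

/-- Two maps are `G`-homotopic if there is a `G`-homotopy from the first to the second. -/
def GHomotopic {X Y : Type*} [TopologicalSpace X] [TopologicalSpace Y]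
    [MulAction G X] [MulAction G Y] (f₀ f₁ : X → Y) : Prop :=
  ∃ K : X × I → Y, IsGHomotopy G K ∧ (∀ x, K (x, 0) = f₀ x) ∧ ∀ x, K (x, 1) = f₁ x

/-- `G`-homotopy equivalence of `G`-spaces. -/
def GHomotopyEquiv (X : Type v) (Y : Type w) [TopologicalSpace X] [TopologicalSpace Y]
    [MulAction G X] [MulAction G Y] : Prop :=
  ∃ (f : X → Y) (g : Y → X), IsGMap G f ∧ IsGMap G g ∧
    GHomotopic G (fun x => g (f x)) id ∧ GHomotopic G (fun y => f (g y)) id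

variable [TopologicalSpace G]

/-- `i : A → B` is an `hG`-cofibration if it is a `G`-map satisfying the `G`-equivariant
homotopy extension property. -/
def IsHCofibration {A : Type v} {B : Type w} [TopologicalSpace A] [TopologicalSpace B]
    [MulAction G A] [MulAction G B] (i : A → B) : Prop :=
  IsGMap G i ∧
    ∀ (Y : Type x) [TopologicalSpace Y] [MulAction G Y] [ContinuousSMul G Y],
      ∀ f : B → Y, IsGMap G f →
        ∀ K : A × I → Y, IsGHomotopy G K → (∀ a, K (a, 0) = f (i a)) →
          ∃ L : B × I → Y, IsGHomotopy G L ∧ (∀ b, L (b, 0) = f b) ∧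
            ∀ a t, L (i a, t) = K (a, t)

/-- `p : E → B` is an `hG`-fibration if it is a `G`-map satisfying the `G`-equivariant
homotopy lifting property. -/
def IsHFibration {E : Type v} {B : Type w} [TopologicalSpace E] [TopologicalSpace B]
    [MulAction G E] [MulAction G B] (p : E → B) : Prop :=
  IsGMap G p ∧
    ∀ (X : Type x) [TopologicalSpace X] [MulAction G X] [ContinuousSMul G X],
      ∀ f : X → E, IsGMap G f →
        ∀ K : X × I → B, IsGHomotopy G K → (∀ x, K (x, 0) = p (f x)) →
          ∃ L : X × I → E, IsGHomotopy G L ∧ (∀ x, L (x, 0) = f x) ∧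
            ∀ x t, p (L (x, t)) = K (x, t)

/-- A (non-equivariant) Serre fibration: a map with the homotopy lifting property
with respect to all disks (equivalently, cubes). -/
def IsSerreFibration {X Y : Type*} [TopologicalSpace X] [TopologicalSpace Y]
    (p : X → Y) : Prop :=
  ∀ (n : ℕ) (f : (Fin n → I) → X) (K : ((Fin n → I) × I) → Y),
    Continuous f → Continuous K → (∀ c, K (c, 0) = p (f c)) →
      ∃ L : ((Fin n → I) × I) → X, Continuous L ∧ (∀ c, L (c, 0) = f c) ∧
        ∀ q, p (L q) = K q

/-- The map induced on path components by a continuous map. -/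
def pi0Map {X : Type v} {Y : Type w} [TopologicalSpace X] [TopologicalSpace Y]
    {f : X → Y} (hf : Continuous f) : ZerothHomotopy X → ZerothHomotopy Y :=
  Quotient.map (sa := pathSetoid X) (sb := pathSetoid Y) f
    (fun _ _ h => Nonempty.map (fun p => p.map hf) h)

/-- Composition of a generalized loop with a continuous map. -/
def genLoopComp {X : Type v} {Y : Type w} [TopologicalSpace X] [TopologicalSpace Y]
    {N : Type*} (f : C(X, Y)) {x : X} (p : GenLoop N X x) : GenLoop N Y (f x) :=
  ⟨f.comp p.1, fun yy hyy => by
    simp only [ContinuousMap.comp_apply]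
    exact congrArg f (p.2 yy hyy)⟩

/-- The map induced on homotopy groups by a continuous map. -/
def piMap {X : Type v} {Y : Type w} [TopologicalSpace X] [TopologicalSpace Y]
    (N : Type*) (f : C(X, Y)) (x : X) :
    HomotopyGroup N X x → HomotopyGroup N Y (f x) :=
  Quotient.map (genLoopComp f) (fun _ _ h => Nonempty.map (fun F => F.compContinuousMap f) h)

/-- A weak homotopy equivalence: a continuous map inducing a bijection on path components
and isomorphisms on all homotopy groups at all basepoints. -/
def IsWeakEquiv {X : Type v} {Y : Type w} [TopologicalSpace X] [TopologicalSpace Y]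
    (f : X → Y) : Prop :=
  ∃ hf : Continuous f,
    Function.Bijective (pi0Map hf) ∧
      ∀ (n : ℕ) (x : X), Function.Bijective (piMap (Fin (n + 1)) ⟨f, hf⟩ x)

/-- The `H`-fixed points of a `G`-space, for `H` a subgroup of `G`. -/
def fixedSet (H : Subgroup G) (X : Type v) [MulAction G X] : Set X :=
  {x | ∀ h ∈ H, h • x = x}

/-- The restriction of an equivariant map to `H`-fixed points. -/
def fixedRes (H : Subgroup G) {X Y : Type*} [MulAction G X] [MulAction G Y]
    (p : X → Y) (hp : ∀ (g : G) (x : X), p (g • x) = g • p x) :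
    fixedSet G H X → fixedSet G H Y :=
  fun x => ⟨p x.1, fun h hh => by rw [← hp h x.1, x.2 h hh]⟩

/-- A `C`-fibration: a `G`-map all of whose `H`-fixed point maps, `H ∈ C`,
are Serre fibrations. -/
def IsCFibration (C : Set (Subgroup G)) {X Y : Type*} [TopologicalSpace X] [TopologicalSpace Y]
    [MulAction G X] [MulAction G Y] (p : X → Y) : Prop :=
  ∃ hp : IsGMap G p, ∀ H ∈ C, IsSerreFibration (fixedRes G H p hp.2)

/-- A `C`-equivalence: a `G`-map all of whose `H`-fixed point maps, `H ∈ C`,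
are weak homotopy equivalences. -/
def IsCEquiv (C : Set (Subgroup G)) {X Y : Type*} [TopologicalSpace X] [TopologicalSpace Y]
    [MulAction G X] [MulAction G Y] (p : X → Y) : Prop :=
  ∃ hp : IsGMap G p, ∀ H ∈ C, IsWeakEquiv (fixedRes G H p hp.2)

/-- A `C`-cofibration: a `G`-map with the left lifting property against all `G`-maps
that are both `C`-fibrations and `C`-equivalences. -/
def IsCCofibration (C : Set (Subgroup G)) {A : Type v} {B : Type w} [TopologicalSpace A]
    [TopologicalSpace B] [MulAction G A] [MulAction G B] (i : A → B) : Prop :=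
  IsGMap G i ∧
    ∀ (X Y : Type x) [TopologicalSpace X] [TopologicalSpace Y] [MulAction G X] [MulAction G Y]
      [ContinuousSMul G X] [ContinuousSMul G Y] (p : X → Y),
        IsCFibration G C p → IsCEquiv G C p →
          ∀ (f : A → X) (g : B → Y), IsGMap G f → IsGMap G g → (∀ a, p (f a) = g (i a)) →
            ∃ l : B → X, IsGMap G l ∧ (∀ a, l (i a) = f a) ∧ ∀ b, p (l b) = g b

/-- A `G`-space is `C`-cofibrant if the map from the empty `G`-space is a `C`-cofibration. -/
def IsCCofibrant (C : Set (Subgroup G)) (X : Type v) [TopologicalSpace X] [MulAction G X] :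
    Prop :=
  IsCCofibration.{u, 0, v, x} G C (fun e : Empty => e.elim : Empty → X)

/-- A `G`-space is `mC`-cofibrant if it is `G`-homotopy equivalent to a `C`-cofibrant
`G`-space. -/
def IsMCofibrant (C : Set (Subgroup G)) (X : Type v) [TopologicalSpace X] [MulAction G X] :
    Prop :=
  ∃ (Z : Type w) (_ : TopologicalSpace Z) (_ : MulAction G Z) (_ : ContinuousSMul G Z),
    IsCCofibrant.{u, w, x} G C Z ∧ GHomotopyEquiv G X Z

/-- A `G`-numerable open cover: a locally finite open cover admitting subordinate
equivariant functions to `[0,1]` cutting out the cover. -/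
def IsGNumerableCover {B : Type v} [TopologicalSpace B] [MulAction G B]
    {ι : Type w} (U : ι → Set B) : Prop :=
  (∀ j, IsOpen (U j)) ∧ (∀ b, ∃ j, b ∈ U j) ∧ LocallyFinite U ∧
    ∀ j, ∃ lam : B → I, Continuous lam ∧ (∀ (g : G) (b : B), lam (g • b) = lam b) ∧
      U j = {b | 0 < lam b}

/-- A set closed under the action of `G`. -/
class GInvariantSet (G : Type u) {X : Type v} [SMul G X] (s : Set X) : Prop where
  smul_mem' : ∀ (g : G) {x : X}, x ∈ s → g • x ∈ s

instance GInvariantSet.instSMul {G : Type u} {X : Type v} [SMul G X] (s : Set X)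
    [GInvariantSet G s] : SMul G s :=
  ⟨fun g x => ⟨g • x.1, GInvariantSet.smul_mem' g x.2⟩⟩

instance GInvariantSet.instMulAction {G : Type u} {X : Type v} [Monoid G] [MulAction G X]
    (s : Set X) [GInvariantSet G s] : MulAction G s where
  one_smul x := Subtype.ext (one_smul G x.1)
  mul_smul a b x := Subtype.ext (mul_smul a b x.1)

instance GInvariantSet.instContinuousSMul {G : Type u} {X : Type v} [TopologicalSpace G]
    [TopologicalSpace X] [Monoid G] [MulAction G X] [ContinuousSMul G X] (s : Set X)
    [GInvariantSet G s] : ContinuousSMul G s :=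
  ⟨by
    apply Continuous.subtype_mk
    exact continuous_smul.comp (continuous_fst.prodMk (continuous_subtype_val.comp
      continuous_snd))⟩
variable [IsTopologicalGroup G] [CompactSpace G]

section
variable {B X Y : Type v} [TopologicalSpace B] [MulAction G B]
  [TopologicalSpace X] [MulAction G X] [TopologicalSpace Y] [MulAction G Y]

/-- A partial solution of the lifting problem `(f, g)` for `i` against `p`, defined on
the subspace `W ⊆ B`: a continuous equivariant map `ψ : W → X` with `p ∘ ψ = g` on `W`
and `ψ ∘ i = f` on `i⁻¹(W)`. -/
def IsPartialSolution {A : Type v} [TopologicalSpace A] [MulAction G A]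
    (i : A → B) (p : X → Y) (f : A → X) (g : B → Y) (W : Set B) (ψ : W → X) : Prop :=
  Continuous ψ ∧
    (∀ (g₀ : G) (w w' : W), (w' : B) = g₀ • (w : B) → ψ w' = g₀ • ψ w) ∧
    (∀ w : W, p (ψ w) = g (w : B)) ∧
    ∀ (a : A) (ha : i a ∈ W), ψ ⟨i a, ha⟩ = f a

end

/-!
Dold's argument for numerable covers, run through Zorn's lemma. Partial lifts live on unions
`⋃ β ∈ J, U β` of subfamilies of the cover, and `s ≤ t` means that `t` enlarges the index set of
`s` and agrees with `s` at every point lying in no new member of the cover. By local finiteness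
a chain involves only finitely many members of the cover near any point, so near that point it
stabilizes, and the limit is an upper bound. A maximal partial lift is defined on all of `B`:
otherwise a lift `ψ` on `V = ⋃ β ∈ J, U β` extends over `U α ∪ V` by following, on `U α ∩ V`,
the relative homotopy from `ψ` to a lift over `U α`, at a time read off from the ratio of the
invariant numerating functions `λ_α` and `∑ β ∈ J, λ_β`; the extension is still equivariant
because these functions are.
-/

open Topology

section LocalToGlobal

omit [TopologicalSpace G] [IsTopologicalGroup G] [CompactSpace G]

section Cozero

variable {B : Type*} [TopologicalSpace B] [MulAction G B]

def IsGCozeroSet (W : Set B) : Prop :=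
  ∃ φ : B → ℝ, Continuous φ ∧ (∀ (g : G) (b : B), φ (g • b) = φ b) ∧ (∀ b, 0 ≤ φ b) ∧
    ∀ b, b ∈ W ↔ 0 < φ b

variable {G}

theorem IsGCozeroSet.smul_mem_iff {W : Set B} (hW : IsGCozeroSet G W) (g : G) (b : B) :
    g • b ∈ W ↔ b ∈ W := by
  obtain ⟨φ, -, hφG, -, hWφ⟩ := hW
  rw [hWφ, hWφ, hφG]

theorem IsGCozeroSet.isOpen {W : Set B} (hW : IsGCozeroSet G W) : IsOpen W := by
  obtain ⟨φ, hφ, -, -, hWφ⟩ := hW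
  rw [show W = {b | 0 < φ b} from Set.ext hWφ]
  exact isOpen_lt continuous_const hφ

theorem IsGNumerableCover.isGCozeroSet {ι : Type*} {U : ι → Set B}
    (hU : IsGNumerableCover G U) (j : ι) : IsGCozeroSet G (U j) := by
  obtain ⟨lam, hlam, hlamG, hUlam⟩ := hU.2.2.2 j
  exact ⟨fun b => lam b, continuous_subtype_val.comp hlam,
    fun g b => congrArg Subtype.val (hlamG g b), fun b => (lam b).2.1,
    fun b => by rw [hUlam]; exact Iff.rfl⟩

theorem IsGCozeroSet.biUnion {ι : Type*} {U : ι → Set B} (hLF : LocallyFinite U)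
    (hU : ∀ j, IsGCozeroSet G (U j)) (J : Set ι) : IsGCozeroSet G (⋃ j ∈ J, U j) := by
  choose φ hφc hφG hφ0 hUφ using hU
  have hsupp : ∀ j : J, Function.support (fun b => φ j b) ⊆ U j := fun j b hb =>
    (hUφ j b).2 ((hφ0 j b).lt_of_ne' hb)
  refine ⟨fun b => ∑ᶠ j : J, φ j b, continuous_finsum (fun j => hφc j)
    ((hLF.comp_injective Subtype.val_injective).subset hsupp), fun g b => by simp only [hφG],
    fun b => finsum_nonneg fun j => hφ0 j b, fun b => ⟨?_, ?_⟩⟩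
  · intro hb
    obtain ⟨j, hj, hbj⟩ := Set.mem_iUnion₂.1 hb
    have hfin : Function.HasFiniteSupport (fun j : J => φ j b) :=
      ((hLF.point_finite b).preimage Subtype.val_injective.injOn).subset
        fun j hj => hsupp j hj
    exact ((hUφ j b).1 hbj).trans_le (single_le_finsum ⟨j, hj⟩ hfin fun j => hφ0 j b)
  · intro hpos
    by_contra hb
    refine hpos.ne' (finsum_eq_zero_of_forall_eq_zero fun j => ?_)
    exact ((hφ0 j b).eq_or_lt.resolve_right fun h =>
      hb (Set.mem_biUnion j.2 ((hUφ j b).2 h))).symm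

end Cozero

theorem continuousOn_of_forall_eq_subtype {B X : Type*} [TopologicalSpace B]
    [TopologicalSpace X] {O V : Set B} {φ : O → X} {ψ : V → X} (hψ : Continuous ψ)
    {S : Set O} (hSV : ∀ y ∈ S, (y : B) ∈ V) (h : ∀ y (hy : y ∈ S), φ y = ψ ⟨y, hSV y hy⟩) :
    ContinuousOn φ S := by
  rw [continuousOn_iff_continuous_domRestrict,
    show S.domRestrict φ = fun y : S => ψ ⟨y, hSV y y.2⟩ from funext fun y => h y y.2]
  fun_prop

section PartialSolutions

variable {A B X Y : Type v} [TopologicalSpace A] [MulAction G A] [TopologicalSpace B]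
  [MulAction G B] [TopologicalSpace X] [MulAction G X]

def IsPartialHomotopy (i : A → B) (p : X → Y) (f : A → X) (g : B → Y) (W : Set B)
    (ψ₁ ψ₂ : W → X) (K : W × I → X) : Prop :=
  Continuous K ∧
    (∀ (g₀ : G) (w w' : W) (t : I), (w' : B) = g₀ • (w : B) → K (w', t) = g₀ • K (w, t)) ∧
    (∀ w, K (w, 0) = ψ₁ w) ∧ (∀ w, K (w, 1) = ψ₂ w) ∧
    (∀ w t, p (K (w, t)) = g (w : B)) ∧
    ∀ (a : A) (ha : i a ∈ W) (t : I), K (⟨i a, ha⟩, t) = f a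

variable {G} {i : A → B} {p : X → Y} {f : A → X} {g : B → Y}

theorem IsPartialSolution.restrict {W W' : Set B} (hsub : W' ⊆ W) {ψ : W → X}
    (hψ : IsPartialSolution G i p f g W ψ) :
    IsPartialSolution G i p f g W' (fun w => ψ (Set.inclusion hsub w)) := by
  obtain ⟨hc, hG, hp, hi⟩ := hψ
  exact ⟨hc.comp (continuous_inclusion hsub), fun g₀ w w' h => hG g₀ _ _ h,
    fun w => hp _, fun a ha => hi a (hsub ha)⟩

theorem IsPartialSolution.of_locally {O : Set B} {φ : O → X}
    (h : ∀ b : O, ∃ (S : Set B) (χ : S → X), IsOpen S ∧ GInvariantSet G S ∧ (b : B) ∈ S ∧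
      IsPartialSolution G i p f g S χ ∧ ∀ (x : O) (hx : (x : B) ∈ S), φ x = χ ⟨x, hx⟩) :
    IsPartialSolution G i p f g O φ := by
  refine ⟨continuous_iff_continuousAt.2 fun b => ?_, fun g₀ w w' hw => ?_, fun w => ?_,
    fun a ha => ?_⟩
  · obtain ⟨S, χ, hSo, -, hbS, hχ, hφχ⟩ := h b
    exact (continuousOn_of_forall_eq_subtype hχ.1 (fun _ hx => hx) hφχ).continuousAt
      ((hSo.preimage continuous_subtype_val).mem_nhds hbS)
  · obtain ⟨S, χ, -, hSG, hwS, hχ, hφχ⟩ := h w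
    have hw'S : (w' : B) ∈ S := hw ▸ hSG.smul_mem' g₀ hwS
    rw [hφχ w hwS, hφχ w' hw'S]
    exact hχ.2.1 g₀ _ _ hw
  · obtain ⟨S, χ, -, -, hwS, hχ, hφχ⟩ := h w
    rw [hφχ w hwS]
    exact hχ.2.2.1 _
  · obtain ⟨S, χ, -, -, haS, hχ, hφχ⟩ := h ⟨i a, ha⟩
    rw [hφχ _ haS]
    exact hχ.2.2.2 a haS

theorem IsPartialHomotopy.isPartialSolution_comp {W : Set B} {ψ₁ ψ₂ : W → X} {K : W × I → X}
    (hK : IsPartialHomotopy G i p f g W ψ₁ ψ₂ K) {u : W → I} (hu : Continuous u)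
    (huG : ∀ (g₀ : G) (w w' : W), (w' : B) = g₀ • (w : B) → u w' = u w) :
    IsPartialSolution G i p f g W fun w => K (w, u w) := by
  obtain ⟨hKc, hKG, -, -, hKp, hKi⟩ := hK
  refine ⟨hKc.comp (continuous_id.prodMk hu), fun g₀ w w' hw => ?_, fun w => hKp w _,
    fun a ha => hKi a ha _⟩
  simp only [huG g₀ w w' hw, hKG _ _ _ _ hw]

theorem IsPartialSolution.exists_lift {W : Set B} {ψ : W → X}
    (hψ : IsPartialSolution G i p f g W ψ) (hW : ∀ b, b ∈ W) :
    ∃ ψ : B → X, IsGMap G ψ ∧ (∀ b, p (ψ b) = g b) ∧ ∀ a, ψ (i a) = f a := by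
  obtain ⟨hc, hG, hp, hi⟩ := hψ
  exact ⟨fun b => ψ ⟨b, hW b⟩, ⟨hc.comp (continuous_id.subtype_mk hW),
    fun g₀ b => hG g₀ _ _ rfl⟩, fun b => hp _, fun a => hi a _⟩

theorem IsPartialSolution.glue {W V : Set B} (hW : IsGCozeroSet G W) (hV : IsGCozeroSet G V)
    {ψ : V → X} {ψ' : W → X} (hψ : IsPartialSolution G i p f g V ψ)
    (hψ' : IsPartialSolution G i p f g W ψ') {K : (W ∩ V : Set B) × I → X}
    (hK : IsPartialHomotopy G i p f g (W ∩ V)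
      (fun w => ψ (Set.inclusion Set.inter_subset_right w))
      (fun w => ψ' (Set.inclusion Set.inter_subset_left w)) K) :
    ∃ φ : (W ∪ V : Set B) → X, IsPartialSolution G i p f g (W ∪ V) φ ∧
      ∀ b (hb : b ∈ V), b ∉ W → φ ⟨b, Or.inr hb⟩ = ψ ⟨b, hb⟩ := by
  classical
  have hWG := hW.smul_mem_iff
  have hVG := hV.smul_mem_iff
  have hWVopen : IsOpen (W ∩ V) := hW.isOpen.inter hV.isOpen
  obtain ⟨lam, hlam, hlamG, hlam0, hWlam⟩ := hW
  obtain ⟨sig, hsig, hsigG, hsig0, hVsig⟩ := hV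
  -- `u` is `0` where `lam ≤ sig` and `1` where `2 * sig ≤ lam`, so `K (·, u ·)` agrees with `ψ`
  -- near `V \ W` and with `ψ'` near `W \ V`.
  set u : B → I := fun b => Set.projIcc 0 1 zero_le_one (lam b / sig b - 1) with hu
  have hu0 : ∀ b ∈ V, lam b ≤ sig b → u b = 0 := fun b hb h =>
    Set.projIcc_of_le_left _ (by rw [sub_nonpos, div_le_one ((hVsig b).1 hb)]; exact h)
  have hu1 : ∀ b ∈ V, 2 * sig b ≤ lam b → u b = 1 := fun b hb h =>
    Set.projIcc_of_right_le _ (by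
      rw [le_sub_iff_add_le, le_div_iff₀ ((hVsig b).1 hb)]; linarith)
  have hχ : IsPartialSolution G i p f g (W ∩ V) fun w => K (w, u w) :=
    hK.isPartialSolution_comp (continuous_projIcc.comp
      (((hlam.comp continuous_subtype_val).div (hsig.comp continuous_subtype_val)
        fun w : (W ∩ V : Set B) => ((hVsig w).1 w.2.2).ne').sub continuous_const))
      fun g₀ w w' hw => by simp only [hu, hw, hlamG, hsigG]
  obtain ⟨-, -, hK0, hK1, -⟩ := hK
  have hlo : {b | lam b < sig b} ⊆ V := fun b hb => (hVsig b).2 ((hlam0 b).trans_lt hb)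
  have hhi : {b | 2 * sig b < lam b} ⊆ W := fun b hb =>
    (hWlam b).2 (by linarith [hsig0 b, show 2 * sig b < lam b from hb])
  let φ : (W ∪ V : Set B) → X := fun b =>
    if h : (b : B) ∈ W ∩ V then K (⟨b, h⟩, u b)
    else if h' : (b : B) ∈ V then ψ ⟨b, h'⟩ else ψ' ⟨b, b.2.resolve_right h'⟩
  refine ⟨φ, IsPartialSolution.of_locally fun ⟨b, hb⟩ => ?_, fun b hb hbW => ?_⟩
  · by_cases hbW : b ∈ W <;> by_cases hbV : b ∈ V
    · exact ⟨W ∩ V, _, hWVopen, ⟨fun g₀ x hx => ⟨(hWG _ _).2 hx.1, (hVG _ _).2 hx.2⟩⟩,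
        ⟨hbW, hbV⟩, hχ, fun x hx => dif_pos hx⟩
    · refine ⟨{b | 2 * sig b < lam b}, _, isOpen_lt (continuous_const.mul hsig) hlam,
        ⟨fun g₀ x hx => ?_⟩, ?_, hψ'.restrict hhi, fun x hx => ?_⟩
      · simpa only [Set.mem_ofPred_eq, hlamG, hsigG] using hx
      · show 2 * sig b < lam b
        linarith [hsig0 b, not_lt.1 (mt (hVsig b).2 hbV), (hWlam b).1 hbW]
      · by_cases hxV : (x : B) ∈ V
        · simp only [φ]
          rw [dif_pos ⟨hhi hx, hxV⟩, hu1 x hxV hx.le, hK1]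
        · simp only [φ, dif_neg (fun h : (x : B) ∈ W ∩ V => hxV h.2), dif_neg hxV]
    · refine ⟨{b | lam b < sig b}, _, isOpen_lt hlam hsig,
        ⟨fun g₀ x hx => ?_⟩, ?_, hψ.restrict hlo, fun x hx => ?_⟩
      · simpa only [Set.mem_ofPred_eq, hlamG, hsigG] using hx
      · show lam b < sig b
        linarith [hlam0 b, not_lt.1 (mt (hWlam b).2 hbW), (hVsig b).1 hbV]
      · by_cases hxW : (x : B) ∈ W
        · simp only [φ]
          rw [dif_pos ⟨hxW, hlo hx⟩, hu0 x (hlo hx) hx.le, hK0]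
        · simp only [φ, dif_neg (fun h : (x : B) ∈ W ∩ V => hxW h.1), dif_pos (hlo hx)]
    · exact (hb.elim hbW hbV).elim
  · simp only [φ, dif_neg (fun h : b ∈ W ∩ V => hbW h.1), dif_pos hb]

variable (G i p f g) in
structure PartialLift {ι : Type*} (U : ι → Set B) where
  indices : Set ι
  lift : (⋃ β ∈ indices, U β : Set B) → X
  isPartialSolution : IsPartialSolution G i p f g _ lift

namespace PartialLift

variable {ι : Type*} {U : ι → Set B}

instance : Preorder (PartialLift G i p f g U) where
  le s t := s.indices ⊆ t.indices ∧
    ∀ b (hs : b ∈ ⋃ β ∈ s.indices, U β) (ht : b ∈ ⋃ β ∈ t.indices, U β),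
      (∀ β ∈ t.indices, b ∈ U β → β ∈ s.indices) → t.lift ⟨b, ht⟩ = s.lift ⟨b, hs⟩
  le_refl s := ⟨subset_rfl, fun _ _ _ _ => rfl⟩
  le_trans s t u hst htu := by
    refine ⟨hst.1.trans htu.1, fun b hs hu hb => ?_⟩
    have ht := Set.biUnion_subset_biUnion_left hst.1 hs
    rw [htu.2 b ht hu fun β hβ hbβ => hst.1 (hb β hβ hbβ),
      hst.2 b hs ht fun β hβ hbβ => hb β (htu.1 hβ) hbβ]

instance : Nonempty (PartialLift G i p f g U) := by
  have : IsEmpty (⋃ β ∈ (∅ : Set ι), U β : Set B) := by simp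
  exact ⟨⟨∅, isEmptyElim, continuous_iff_continuousAt.2 isEmptyElim,
    fun _ w => isEmptyElim w, isEmptyElim,
    fun _ ha => isEmptyElim (⟨_, ha⟩ : (⋃ β ∈ (∅ : Set ι), U β : Set B))⟩⟩

theorem lift_eq_of_le_or_le {s t : PartialLift G i p f g U} (hst : s ≤ t ∨ t ≤ s) {b : B}
    (hs : b ∈ ⋃ β ∈ s.indices, U β) (ht : b ∈ ⋃ β ∈ t.indices, U β)
    (hts : ∀ β ∈ t.indices, b ∈ U β → β ∈ s.indices)
    (hst' : ∀ β ∈ s.indices, b ∈ U β → β ∈ t.indices) :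
    s.lift ⟨b, hs⟩ = t.lift ⟨b, ht⟩ :=
  hst.elim (fun h => (h.2 b hs ht hts).symm) fun h => h.2 b ht hs hst'

theorem exists_nhds_forall_mem_indices (hLF : LocallyFinite U)
    {c : Set (PartialLift G i p f g U)} (hc : IsChain (· ≤ ·) c) (hne : c.Nonempty) (b : B) :
    ∃ N ∈ 𝓝 b, ∃ s ∈ c, ∀ b' ∈ N, ∀ β ∈ ⋃ t ∈ c, indices t, b' ∈ U β → β ∈ s.indices := by
  obtain ⟨N, hN, hfin⟩ := hLF b
  have hS := hfin.inter_of_left (⋃ t ∈ c, indices t)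
  have hdir : DirectedOn (fun s t => indices s ⊆ indices t) c :=
    hc.directedOn.mono fun _ _ h => h.1
  obtain ⟨s, hs, hsub⟩ :=
    hdir.exists_mem_subset_of_finset_subset_biUnion hne (s := hS.toFinset) (by simp)
  refine ⟨N, hN, s, hs, fun b' hb' β hβ hbβ => hsub ?_⟩
  rw [Set.Finite.coe_toFinset]
  exact ⟨⟨b', hbβ, hb'⟩, hβ⟩

theorem bddAbove_of_isChain (hLF : LocallyFinite U)
    (hUG : ∀ j (g₀ : G) (b : B), g₀ • b ∈ U j ↔ b ∈ U j) {c : Set (PartialLift G i p f g U)}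
    (hc : IsChain (· ≤ ·) c) (hne : c.Nonempty) : BddAbove c := by
  set J := ⋃ t ∈ c, indices t
  choose N hN s hs hsJ using exists_nhds_forall_mem_indices hLF hc hne
  have hmem : ∀ t ∈ c, ∀ b, (∀ β ∈ J, b ∈ U β → β ∈ t.indices) →
      b ∈ ⋃ β ∈ J, U β → b ∈ ⋃ β ∈ t.indices, U β := fun t _ b hbt hb => by
    obtain ⟨β, hβ, hbβ⟩ := Set.mem_iUnion₂.1 hb
    exact Set.mem_biUnion (hbt β hβ hbβ) hbβ
  have hsJ_self : ∀ b, ∀ β ∈ J, b ∈ U β → β ∈ (s b).indices := fun b =>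
    hsJ b b (mem_of_mem_nhds (hN b))
  let ψ : (⋃ β ∈ J, U β : Set B) → X := fun b =>
    (s b).lift ⟨b, hmem _ (hs b) b (hsJ_self b) b.2⟩
  have hψ : ∀ t ∈ c, ∀ b : (⋃ β ∈ J, U β : Set B), (∀ β ∈ J, (b : B) ∈ U β → β ∈ t.indices) →
      ∀ hbt, ψ b = t.lift ⟨b, hbt⟩ := fun t ht b hbt _ =>
    lift_eq_of_le_or_le (hc.total (hs b) ht) _ _
      (fun β hβ hbβ => hsJ_self b β (Set.mem_biUnion ht hβ) hbβ)
      (fun β hβ hbβ => hbt β (Set.mem_biUnion (hs b) hβ) hbβ)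
  refine ⟨⟨J, ψ, ⟨?_, ?_, fun b => (s b).isPartialSolution.2.2.1 _,
    fun a _ => (s _).isPartialSolution.2.2.2 a _⟩⟩,
    fun t ht => ⟨Set.subset_biUnion_of_mem ht, fun b hbt hbJ hJt => hψ t ht ⟨b, hbJ⟩ hJt hbt⟩⟩
  · refine continuous_iff_continuousAt.2 fun b => ?_
    exact (continuousOn_of_forall_eq_subtype (s b).isPartialSolution.1
      (fun b' hb' => hmem _ (hs b) b' (hsJ b b' hb') b'.2)
      (fun b' hb' => hψ _ (hs b) b' (hsJ b b' hb') _)).continuousAt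
      (continuous_subtype_val.continuousAt.preimage_mem_nhds (hN b))
  · intro g₀ w w' hw
    have hJw' : ∀ β ∈ J, (w' : B) ∈ U β → β ∈ (s w).indices := fun β hβ hβw' =>
      hsJ_self w β hβ ((hUG β g₀ w).1 (hw ▸ hβw'))
    rw [hψ _ (hs w) w' hJw' (hmem _ (hs w) w' hJw' w'.2)]
    exact (s w).isPartialSolution.2.1 g₀ _ _ hw

theorem exists_le_mem_indices (hUG : ∀ j, IsGCozeroSet G (U j)) (hLF : LocallyFinite U)
    (s : PartialLift G i p f g U) {α : ι} (hα : α ∉ s.indices) {ψα : U α → X}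
    (hψα : IsPartialSolution G i p f g (U α) ψα)
    (huniq : ∀ ψ₁ ψ₂ : (U α ∩ ⋃ β ∈ s.indices, U β : Set B) → X,
      IsPartialSolution G i p f g _ ψ₁ → IsPartialSolution G i p f g _ ψ₂ →
        ∃ K, IsPartialHomotopy G i p f g _ ψ₁ ψ₂ K) :
    ∃ t : PartialLift G i p f g U, s ≤ t ∧ α ∈ t.indices := by
  obtain ⟨K, hK⟩ := huniq _ _ (s.isPartialSolution.restrict Set.inter_subset_right)
    (hψα.restrict Set.inter_subset_left)
  obtain ⟨φ, hφ, hφs⟩ := s.isPartialSolution.glue (hUG α) (.biUnion hLF hUG _) hψα hK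
  have hsub : ⋃ β ∈ insert α s.indices, U β ⊆ U α ∪ ⋃ β ∈ s.indices, U β :=
    (Set.biUnion_insert _ _ _).subset
  exact ⟨⟨_, _, hφ.restrict hsub⟩, ⟨Set.subset_insert _ _, fun b hs _ hb =>
    hφs b hs fun hbα => hα (hb α (Set.mem_insert _ _) hbα)⟩, Set.mem_insert _ _⟩

end PartialLift

end PartialSolutions

end LocalToGlobal

theorem statement6 {A B X Y : Type v}
    [TopologicalSpace A] [MulAction G A]
    [TopologicalSpace B] [MulAction G B]
    [TopologicalSpace X] [MulAction G X]
    (i : A → B) (p : X → Y) (f : A → X) (g : B → Y)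
    {ι : Type v} (U : ι → Set B) (hU : IsGNumerableCover G U)
    (hexists : ∀ (α : ι) (J : Set ι),
      ∃ ψ : (U α ∩ ⋃ β ∈ J, U β : Set B) → X, IsPartialSolution G i p f g _ ψ)
    (huniq : ∀ (α : ι) (J : Set ι)
      (ψ₁ ψ₂ : (U α ∩ ⋃ β ∈ J, U β : Set B) → X),
      IsPartialSolution G i p f g _ ψ₁ → IsPartialSolution G i p f g _ ψ₂ →
        ∃ K : (U α ∩ ⋃ β ∈ J, U β : Set B) × I → X, Continuous K ∧
          (∀ (g₀ : G) (w w' : (U α ∩ ⋃ β ∈ J, U β : Set B)) (t : I),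
            (w' : B) = g₀ • (w : B) → K (w', t) = g₀ • K (w, t)) ∧
          (∀ w, K (w, 0) = ψ₁ w) ∧ (∀ w, K (w, 1) = ψ₂ w) ∧
          (∀ w t, p (K (w, t)) = g (w : B)) ∧
          ∀ (a : A) (ha : i a ∈ (U α ∩ ⋃ β ∈ J, U β : Set B)) (t : I),
            K (⟨i a, ha⟩, t) = f a) :
    ∃ ψ : B → X, IsGMap G ψ ∧ (∀ b, p (ψ b) = g b) ∧ ∀ a, ψ (i a) = f a := by
  have hUG := hU.isGCozeroSet
  obtain ⟨-, hcov, hLF, -⟩ := hU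
  obtain ⟨m, hm⟩ := zorn_le_nonempty (α := PartialLift G i p f g U) fun _ hc hne =>
    PartialLift.bddAbove_of_isChain hLF (fun j => (hUG j).smul_mem_iff) hc hne
  have hall : ∀ α, α ∈ m.indices := by
    intro α
    by_contra hα
    obtain ⟨ψα, hψα⟩ := hexists α {α}
    have hsub : U α ⊆ U α ∩ ⋃ β ∈ ({α} : Set ι), U β := fun _ hb =>
      ⟨hb, Set.mem_biUnion (Set.mem_singleton α) hb⟩
    obtain ⟨t, hmt, hαt⟩ :=
      m.exists_le_mem_indices hUG hLF hα (hψα.restrict hsub) (huniq α m.indices)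
    exact hα ((hm hmt).1 hαt)
  exact m.isPartialSolution.exists_lift fun b =>
    let ⟨α, hα⟩ := hcov b
    Set.mem_biUnion (hall α) hα
end
end

section
/- Let p: X → Y be a G-map and suppose there exists a cover of Y by G-invariant open sets {U_i}_{i ∈ I} such that each restriction p: p⁻¹(U_i) → U_i is a C-fibration. Then p is a C-fibration. -/
open unitInterval Pointwise

noncomputable section

universe u v w x

variable (G : Type u) [Group G]

variable [TopologicalSpace G]

variable [IsTopologicalGroup G] [CompactSpace G]

/-! On `H`-fixed points the hypothesis says that `p^H` is a Serre fibration over each member of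
the open cover `(U_j)^H` of `Y^H`, so the theorem is the locality of Serre fibrations.

Given a lifting problem `K : Iⁿ × I → Y^H`, the Lebesgue number lemma gives a grid on `Iⁿ × I`
each of whose cells `K` maps into a single member of the cover. The cells are lifted one by one
in an order extending the product order on their indices, so that a cell `c` meets the part
already lifted exactly in its bottom and its lower faces `x_i = c_i / N` with `c_i > 0`. After
rescaling, this is the pair `(Iⁿ × I, Iⁿ × 0 ∪ ⋃_{i ∈ S} {x_i = 0} × I)`, a retract of
`(Iⁿ × I, Iⁿ × 0)`: folding the square of the coordinates `(x_i, t)` so that its left edge lands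
on its bottom edge removes one face at a time. Hence a Serre fibration extends partial lifts
over each cell. -/

open Set

section RelativeLifting

variable {E B Z Z' : Type*} [TopologicalSpace E] [TopologicalSpace B] [TopologicalSpace Z]
  [TopologicalSpace Z']

def RelLiftingProperty (q : E → B) (V : Set B) (A C : Set Z) : Prop :=
  ∀ K : Z → B, Continuous K → MapsTo K C V →
    ∀ ℓ : Z → E, ContinuousOn ℓ A → (∀ z ∈ A, q (ℓ z) = K z) →
      ∃ L : Z → E, ContinuousOn L C ∧ EqOn L ℓ A ∧ ∀ z ∈ C, q (L z) = K z

theorem RelLiftingProperty.of_retraction {q : E → B} {V : Set B} {A C : Set Z}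
    {A' C' : Set Z'} (h : RelLiftingProperty q V A C) {r : Z → Z'} {s : Z' → Z}
    (hr : Continuous r) (hs : Continuous s) (hrs : ∀ z ∈ C', r (s z) = z) (hA'C' : A' ⊆ C')
    (hrC : MapsTo r C C') (hsC : MapsTo s C' C) (hrA : MapsTo r A A') (hsA : MapsTo s A' A) :
    RelLiftingProperty q V A' C' := by
  intro K hK hKV ℓ hℓ hqℓ
  obtain ⟨L, hLc, hLℓ, hqL⟩ := h (K ∘ r) (hK.comp hr) (hKV.comp hrC) (ℓ ∘ r)
    (hℓ.comp hr.continuousOn hrA) fun z hz => hqℓ _ (hrA hz)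
  refine ⟨L ∘ s, hLc.comp hs.continuousOn hsC, fun z hz => ?_, fun z hz => ?_⟩
  · simp only [Function.comp_apply, hLℓ (hsA hz), hrs z (hA'C' hz)]
  · simp only [Function.comp_apply, hqL _ (hsC hz), hrs z hz]

theorem RelLiftingProperty.exists_extend {q : E → B} {V : Set B} {A C D : Set Z}
    (h : RelLiftingProperty q V A C) {K : Z → B} (hK : Continuous K) (hKV : MapsTo K C V)
    (hC : IsClosed C) (hD : IsClosed D) (hCD : C ∩ D ⊆ A) (hAD : A ⊆ D) {F : Z → E}
    (hF : ContinuousOn F D) (hqF : ∀ z ∈ D, q (F z) = K z) :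
    ∃ F' : Z → E, ContinuousOn F' (D ∪ C) ∧ EqOn F' F D ∧
      ∀ z ∈ D ∪ C, q (F' z) = K z := by
  classical
  obtain ⟨L, hLc, hLF, hqL⟩ := h K hK hKV F (hF.mono hAD) fun z hz => hqF z (hAD hz)
  have hagree : EqOn (D.piecewise F L) L C := fun z hz => by
    by_cases hzD : z ∈ D
    · rw [piecewise_eq_of_mem _ _ _ hzD, hLF (hCD ⟨hz, hzD⟩)]
    · rw [piecewise_eq_of_notMem _ _ _ hzD]
  refine ⟨D.piecewise F L, ?_, fun z hz => piecewise_eq_of_mem _ _ _ hz, ?_⟩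
  · exact (hF.congr fun z hz => piecewise_eq_of_mem _ _ _ hz).union_of_isClosed
      (hLc.congr hagree) hD hC
  · rintro z (hz | hz)
    · rw [piecewise_eq_of_mem _ _ _ hz, hqF z hz]
    · rw [hagree hz, hqL z hz]

end RelativeLifting

section LowerFaces

variable {n : ℕ} {E B : Type*} [TopologicalSpace E] [TopologicalSpace B]

def lowerFaces (S : Finset (Fin n)) : Set ((Fin n → I) × I) :=
  {z | z.2 = 0 ∨ ∃ i ∈ S, z.1 i = 0}

theorem relLiftingProperty_lowerFaces_empty {q : E → B} {V : Set B}
    (hq : IsSerreFibration (V.restrictPreimage q)) :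
    RelLiftingProperty q V (lowerFaces (∅ : Finset (Fin n))) univ := by
  intro K hK hKV ℓ hℓ hqℓ
  have hbot : ∀ x : Fin n → I, ((x, 0) : (Fin n → I) × I) ∈ lowerFaces ∅ :=
    fun _ => Or.inl rfl
  have hf : Continuous fun x : Fin n → I => ℓ (x, 0) :=
    hℓ.comp_continuous (by fun_prop) hbot
  have hfV : ∀ x, ℓ (x, 0) ∈ q ⁻¹' V := fun x => by
    rw [mem_preimage, hqℓ _ (hbot x)]
    exact hKV (mem_univ _)
  obtain ⟨L, hLc, hL0, hqL⟩ := hq n (fun x => ⟨ℓ (x, 0), hfV x⟩)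
    (fun z => ⟨K z, hKV (mem_univ z)⟩) (hf.subtype_mk hfV) (hK.subtype_mk _)
    (fun x => Subtype.ext (hqℓ _ (hbot x)).symm)
  refine ⟨fun z => L z, (continuous_subtype_val.comp hLc).continuousOn, ?_, fun z _ => ?_⟩
  · rintro ⟨x, t⟩ (rfl | ⟨i, hi, -⟩)
    · exact congrArg Subtype.val (hL0 x)
    · exact absurd hi (Finset.notMem_empty i)
  · exact congrArg Subtype.val (hqL z)

def cornerFold (x : I × I) : I × I :=
  (projIcc 0 1 zero_le_one (((x.1 : ℝ) - x.2 + 1) / 2),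
    projIcc 0 1 zero_le_one (min (x.1 : ℝ) x.2))

def cornerUnfold (x : I × I) : I × I :=
  (projIcc 0 1 zero_le_one (x.2 + max (2 * (x.1 : ℝ) - 1) 0),
    projIcc 0 1 zero_le_one (x.2 + max (1 - 2 * (x.1 : ℝ)) 0))

theorem continuous_cornerFold : Continuous cornerFold := by
  unfold cornerFold; fun_prop

theorem continuous_cornerUnfold : Continuous cornerUnfold := by
  unfold cornerUnfold; fun_prop

theorem cornerUnfold_cornerFold (x : I × I) : cornerUnfold (cornerFold x) = x := by
  obtain ⟨⟨s, hs0, hs1⟩, ⟨t, ht0, ht1⟩⟩ := x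
  have hu : (((s - t + 1) / 2 : ℝ)) ∈ Icc (0 : ℝ) 1 := ⟨by linarith, by linarith⟩
  have hv : min s t ∈ Icc (0 : ℝ) 1 := ⟨le_min hs0 ht0, (min_le_left _ _).trans hs1⟩
  have h1 : min s t + max (2 * ((s - t + 1) / 2) - 1) 0 = s := by grind
  have h2 : min s t + max (1 - 2 * ((s - t + 1) / 2)) 0 = t := by grind
  simp only [cornerFold, cornerUnfold, projIcc_of_mem _ hu, projIcc_of_mem _ hv, h1, h2]
  ext <;> simp [projIcc_of_mem, *]

theorem cornerFold_snd_eq_zero {x : I × I} (hx : x.1 = 0 ∨ x.2 = 0) : (cornerFold x).2 = 0 := by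
  rcases hx with hx | hx <;> ext <;> simp [cornerFold, hx, x.1.2.1, x.2.2.1]

theorem cornerUnfold_fst_eq_zero_or_snd_eq_zero {x : I × I} (hx : x.2 = 0) :
    (cornerUnfold x).1 = 0 ∨ (cornerUnfold x).2 = 0 := by
  rcases le_total (x.1 : ℝ) (1 / 2) with h | h
  · left; ext; simp [cornerUnfold, hx, max_eq_right (by linarith : 2 * (x.1 : ℝ) - 1 ≤ 0)]
  · right; ext; simp [cornerUnfold, hx, max_eq_right (by linarith : 1 - 2 * (x.1 : ℝ) ≤ 0)]

def coordTimeMap (φ : I × I → I × I) (i : Fin n) (z : (Fin n → I) × I) :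
    (Fin n → I) × I :=
  (Function.update z.1 i (φ (z.1 i, z.2)).1, (φ (z.1 i, z.2)).2)

theorem continuous_coordTimeMap {φ : I × I → I × I} (hφ : Continuous φ) (i : Fin n) :
    Continuous (coordTimeMap φ i) := by
  have : Continuous fun z : (Fin n → I) × I => φ (z.1 i, z.2) := by fun_prop
  exact (continuous_fst.update i (continuous_fst.comp this)).prodMk (continuous_snd.comp this)

theorem coordTimeMap_coordTimeMap (φ ψ : I × I → I × I) (i : Fin n) (z : (Fin n → I) × I) :
    coordTimeMap φ i (coordTimeMap ψ i z) = coordTimeMap (φ ∘ ψ) i z := by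
  simp [coordTimeMap]

theorem relLiftingProperty_lowerFaces_insert {q : E → B} {V : Set B} {S : Finset (Fin n)}
    {i : Fin n} (hi : i ∉ S)
    (h : RelLiftingProperty q V (lowerFaces S) univ) :
    RelLiftingProperty q V (lowerFaces (insert i S)) univ := by
  refine h.of_retraction (continuous_coordTimeMap continuous_cornerUnfold i)
    (continuous_coordTimeMap continuous_cornerFold i) (fun z _ => ?_) (subset_univ _)
    (mapsTo_univ _ _) (mapsTo_univ _ _) ?_ ?_
  · rw [coordTimeMap_coordTimeMap, show cornerUnfold ∘ cornerFold = id from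
      funext cornerUnfold_cornerFold]
    simp [coordTimeMap]
  · rintro ⟨x, t⟩ (ht | ⟨j, hj, hxj⟩)
    · rcases cornerUnfold_fst_eq_zero_or_snd_eq_zero (x := (x i, t)) ht with h0 | h0
      · exact Or.inr ⟨i, Finset.mem_insert_self i S, by simp [coordTimeMap, h0]⟩
      · exact Or.inl h0
    · have hji : j ≠ i := ne_of_mem_of_not_mem hj hi
      exact Or.inr ⟨j, Finset.mem_insert_of_mem hj, by simpa [coordTimeMap, hji] using hxj⟩
  · rintro ⟨x, t⟩ (ht | ⟨j, hj, hxj⟩)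
    · exact Or.inl (cornerFold_snd_eq_zero (Or.inr ht))
    · rcases Finset.mem_insert.1 hj with rfl | hj
      · exact Or.inl (cornerFold_snd_eq_zero (Or.inl hxj))
      · have hji : j ≠ i := ne_of_mem_of_not_mem hj hi
        exact Or.inr ⟨j, hj, by simpa [coordTimeMap, hji] using hxj⟩

theorem relLiftingProperty_lowerFaces {q : E → B} {V : Set B}
    (hq : IsSerreFibration (V.restrictPreimage q)) (S : Finset (Fin n)) :
    RelLiftingProperty q V (lowerFaces S) univ := by
  induction S using Finset.induction_on with
  | empty => exact relLiftingProperty_lowerFaces_empty hq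
  | insert i S hi ih => exact relLiftingProperty_lowerFaces_insert hi ih

end LowerFaces

section Grid

def gridInterval (N k : ℕ) : Set I := {x | (k : ℝ) / N ≤ x ∧ (x : ℝ) ≤ (k + 1) / N}

def gridEmbed (N k : ℕ) (x : I) : I := projIcc 0 1 zero_le_one ((x + k) / N)

def gridProj (N k : ℕ) (x : I) : I := projIcc 0 1 zero_le_one (N * x - k)

variable {N k : ℕ}

theorem isClosed_gridInterval (N k : ℕ) : IsClosed (gridInterval N k) :=
  (isClosed_le continuous_const continuous_subtype_val).inter
    (isClosed_le continuous_subtype_val continuous_const)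

theorem continuous_gridEmbed (N k : ℕ) : Continuous (gridEmbed N k) := by
  unfold gridEmbed; fun_prop

theorem continuous_gridProj (N k : ℕ) : Continuous (gridProj N k) := by
  unfold gridProj; fun_prop

theorem coe_gridEmbed (hk : k < N) (x : I) : (gridEmbed N k x : ℝ) = (x + k) / N := by
  have hN : (0 : ℝ) < N := by exact_mod_cast (Nat.zero_le k).trans_lt hk
  have hkN : (k : ℝ) + 1 ≤ N := by exact_mod_cast hk
  rw [gridEmbed, projIcc_of_mem]
  exact ⟨by have := x.2.1; positivity, by rw [div_le_one hN]; linarith [x.2.2]⟩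

theorem gridEmbed_mem (hk : k < N) (x : I) : gridEmbed N k x ∈ gridInterval N k := by
  show (k : ℝ) / N ≤ gridEmbed N k x ∧ (gridEmbed N k x : ℝ) ≤ (k + 1) / N
  rw [coe_gridEmbed hk]
  constructor <;> apply div_le_div_of_nonneg_right _ (Nat.cast_nonneg N) <;> linarith [x.2.1, x.2.2]

theorem coe_gridEmbed_zero (hk : k < N) : (gridEmbed N k 0 : ℝ) = k / N := by
  simp [coe_gridEmbed hk]

theorem gridEmbed_gridProj {x : I} (hx : x ∈ gridInterval N k) :
    gridEmbed N k (gridProj N k x) = x := by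
  rcases Nat.eq_zero_or_pos N with rfl | hN
  · have hx0 : (x : ℝ) = 0 := le_antisymm (by simpa using hx.2) x.2.1
    ext; simp [gridEmbed, gridProj, hx0]
  have hN : (0 : ℝ) < N := Nat.cast_pos.2 hN
  have hmem : (N : ℝ) * x - k ∈ Icc (0 : ℝ) 1 := by
    have h1 := (div_le_iff₀ hN).1 hx.1
    have h2 := (le_div_iff₀ hN).1 hx.2
    constructor <;> linarith
  have hx' : ((N : ℝ) * x - k + k) / N = x := by field_simp; ring
  rw [gridProj, projIcc_of_mem _ hmem, gridEmbed]
  simp only [hx', projIcc_val]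

theorem gridProj_eq_zero {x : I} (hx : (x : ℝ) = k / N) : gridProj N k x = 0 := by
  have hle : (N : ℝ) * x - k ≤ 0 := by
    rcases eq_or_ne (N : ℝ) 0 with hN | hN
    · simp [hN]
    · rw [hx, mul_div_cancel₀ _ hN, sub_self]
  rw [gridProj, projIcc_of_le_left _ hle]
  rfl

theorem exists_mem_gridInterval (hN : 0 < N) (x : I) : ∃ k : Fin N, x ∈ gridInterval N k := by
  have hNR : (0 : ℝ) < N := Nat.cast_pos.2 hN
  have hxN : 0 ≤ (x : ℝ) * N := mul_nonneg x.2.1 hNR.le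
  refine ⟨⟨min ⌊(x : ℝ) * N⌋₊ (N - 1), by omega⟩, (div_le_iff₀ hNR).2 ?_,
    (le_div_iff₀ hNR).2 ?_⟩
  · exact (Nat.cast_le.2 (min_le_left _ _)).trans (Nat.floor_le hxN)
  · show (x : ℝ) * N ≤ ((min ⌊(x : ℝ) * N⌋₊ (N - 1) : ℕ) : ℝ) + 1
    rcases le_total ⌊(x : ℝ) * N⌋₊ (N - 1) with h | h
    · rw [min_eq_left h]
      exact (Nat.lt_floor_add_one _).le
    · rw [min_eq_right h, Nat.cast_sub hN, Nat.cast_one, sub_add_cancel]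
      exact mul_le_of_le_one_left hNR.le x.2.2

theorem dist_le_of_mem_gridInterval {x y : I} (hx : x ∈ gridInterval N k)
    (hy : y ∈ gridInterval N k) : dist x y ≤ 1 / N := by
  have hwidth : ((k : ℝ) + 1) / N - k / N = 1 / N := by ring
  rw [Subtype.dist_eq, Real.dist_eq, abs_sub_le_iff]
  constructor <;> linarith [hx.1, hx.2, hy.1, hy.2]

theorem coe_eq_of_mem_gridInterval_of_lt {x : I} {k k' : ℕ} (hx : x ∈ gridInterval N k)
    (hx' : x ∈ gridInterval N k') (hk : k' < k) : (x : ℝ) = k / N := by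
  have : ((k' : ℝ) + 1) / N ≤ k / N :=
    div_le_div_of_nonneg_right (by exact_mod_cast hk) (Nat.cast_nonneg N)
  exact le_antisymm (hx'.2.trans this) hx.1

theorem exists_lt_mem_gridInterval {x : I} {k : Fin N} (hk : 0 < (k : ℕ))
    (hx : (x : ℝ) = k / N) : ∃ k' < k, x ∈ gridInterval N k' := by
  refine ⟨⟨k - 1, by omega⟩, Fin.mk_lt_of_lt_val (by omega), ?_, ?_⟩ <;>
    simp only [hx, Nat.cast_sub (Nat.one_le_iff_ne_zero.2 hk.ne'), Nat.cast_one, sub_add_cancel]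
  · exact div_le_div_of_nonneg_right (by linarith) (Nat.cast_nonneg N)
  · exact le_rfl

end Grid

theorem IsLowerSet.erase_maximal {α : Type*} [PartialOrder α] [DecidableEq α] {T : Finset α}
    (hT : IsLowerSet (T : Set α)) {c : α} (hc : Maximal (· ∈ T) c) :
    IsLowerSet ((T.erase c : Finset α) : Set α) := by
  intro x y hyx hx
  obtain ⟨hxc, hxT⟩ := Finset.mem_erase.1 hx
  refine Finset.mem_erase.2 ⟨fun hyc => hxc ?_, hT hyx hxT⟩
  subst hyc
  exact le_antisymm (hc.2 hxT hyx) hyx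

section GridCell

variable {n N : ℕ} {E B : Type*} [TopologicalSpace E] [TopologicalSpace B]

abbrev GridIndex (n N : ℕ) : Type := (Fin n → Fin N) × Fin N

def gridCell (N : ℕ) (c : GridIndex n N) : Set ((Fin n → I) × I) :=
  (univ.pi fun i => gridInterval N (c.1 i)) ×ˢ gridInterval N c.2

def gridCellLowerFaces (N : ℕ) (c : GridIndex n N) : Set ((Fin n → I) × I) :=
  gridCell N c ∩
    {z | (z.2 : ℝ) = c.2 / N ∨ ∃ i, 0 < (c.1 i : ℕ) ∧ (z.1 i : ℝ) = c.1 i / N}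

def gridCellEmbed (N : ℕ) (c : GridIndex n N) (w : (Fin n → I) × I) :
    (Fin n → I) × I :=
  (fun i => gridEmbed N (c.1 i) (w.1 i), gridEmbed N c.2 w.2)

def gridCellProj (N : ℕ) (c : GridIndex n N) (z : (Fin n → I) × I) :
    (Fin n → I) × I :=
  (fun i => gridProj N (c.1 i) (z.1 i), gridProj N c.2 z.2)

theorem isClosed_gridCell (c : GridIndex n N) : IsClosed (gridCell N c) :=
  (isClosed_set_pi fun _ _ => isClosed_gridInterval N _).prod (isClosed_gridInterval N _)

theorem gridCellEmbed_mem (c : GridIndex n N) (w : (Fin n → I) × I) :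
    gridCellEmbed N c w ∈ gridCell N c :=
  ⟨fun i _ => gridEmbed_mem (c.1 i).2 _, gridEmbed_mem c.2.2 _⟩

theorem dist_le_of_mem_gridCell {c : GridIndex n N} {z w : (Fin n → I) × I}
    (hz : z ∈ gridCell N c) (hw : w ∈ gridCell N c) : dist z w ≤ 1 / N := by
  rw [Prod.dist_eq]
  exact max_le ((dist_pi_le_iff (by positivity)).2 fun i =>
    dist_le_of_mem_gridInterval (hz.1 i trivial) (hw.1 i trivial))
    (dist_le_of_mem_gridInterval hz.2 hw.2)

theorem relLiftingProperty_gridCell {q : E → B} {V : Set B} {c : GridIndex n N}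
    (h : RelLiftingProperty q V (lowerFaces {i | 0 < (c.1 i : ℕ)}) univ) :
    RelLiftingProperty q V (gridCellLowerFaces N c) (gridCell N c) := by
  refine h.of_retraction (r := gridCellEmbed N c) (s := gridCellProj N c) ?_ ?_ ?_
    inter_subset_left ?_ (mapsTo_univ _ _) ?_ ?_
  · exact (continuous_pi fun i => (continuous_gridEmbed N _).comp
      ((continuous_apply i).comp continuous_fst)).prodMk
      ((continuous_gridEmbed N _).comp continuous_snd)
  · exact (continuous_pi fun i => (continuous_gridProj N _).comp
      ((continuous_apply i).comp continuous_fst)).prodMk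
      ((continuous_gridProj N _).comp continuous_snd)
  · exact fun z hz => Prod.ext (funext fun i => gridEmbed_gridProj (hz.1 i trivial))
      (gridEmbed_gridProj hz.2)
  · exact fun w _ => gridCellEmbed_mem c w
  · rintro ⟨x, t⟩ (rfl | ⟨i, hi, hxi⟩)
    · exact ⟨gridCellEmbed_mem c _, Or.inl (coe_gridEmbed_zero c.2.2)⟩
    · refine ⟨gridCellEmbed_mem c _, Or.inr ⟨i, by simpa using hi, ?_⟩⟩
      rw [← coe_gridEmbed_zero (c.1 i).2, ← hxi]
      rfl
  · rintro ⟨x, t⟩ ⟨-, ht | ⟨i, hi, hxi⟩⟩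
    · exact Or.inl (gridProj_eq_zero ht)
    · exact Or.inr ⟨i, by simpa using hi, gridProj_eq_zero hxi⟩

def gridRegion (N : ℕ) (T : Finset (GridIndex n N)) : Set ((Fin n → I) × I) :=
  {z | z.2 = 0} ∪ ⋃ c ∈ T, gridCell N c

theorem isClosed_gridRegion (T : Finset (GridIndex n N)) :
    IsClosed (gridRegion N T) :=
  (isClosed_eq continuous_snd continuous_const).union
    (isClosed_biUnion_finset fun c _ => isClosed_gridCell c)

theorem gridRegion_eq_erase_union {T : Finset (GridIndex n N)}
    {c : GridIndex n N} (hc : c ∈ T) :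
    gridRegion N T = gridRegion N (T.erase c) ∪ gridCell N c := by
  conv_lhs => rw [← Finset.insert_erase hc]
  rw [gridRegion, gridRegion, Finset.set_biUnion_insert, union_comm (gridCell N c),
    union_assoc]

theorem gridCell_inter_gridRegion_erase_subset {T : Finset (GridIndex n N)}
    {c : GridIndex n N} (hc : Maximal (· ∈ T) c) :
    gridCell N c ∩ gridRegion N (T.erase c) ⊆ gridCellLowerFaces N c := by
  rintro z ⟨hzc, hz0 | hz⟩
  · have hz0 : (z.2 : ℝ) = 0 := congrArg Subtype.val (show z.2 = 0 from hz0)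
    have := hzc.2.1
    exact ⟨hzc, Or.inl (le_antisymm (by rw [hz0]; positivity) this)⟩
  obtain ⟨c', hc'T, hzc'⟩ := mem_iUnion₂.1 hz
  obtain ⟨hc'c, hc'T⟩ := Finset.mem_erase.1 hc'T
  have hnle : ¬c ≤ c' := fun hle => hc'c (le_antisymm (hc.2 hc'T hle) hle)
  rw [Prod.le_def, Pi.le_def] at hnle
  by_cases h : ∀ i, c.1 i ≤ c'.1 i
  · have ht : c'.2 < c.2 := lt_of_not_ge fun ht => hnle ⟨h, ht⟩
    exact ⟨hzc, Or.inl (coe_eq_of_mem_gridInterval_of_lt hzc.2 hzc'.2 ht)⟩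
  · obtain ⟨i, hi⟩ : ∃ i, c'.1 i < c.1 i := by simpa only [not_forall, not_le] using h
    exact ⟨hzc, Or.inr ⟨i, (Nat.zero_le _).trans_lt hi,
      coe_eq_of_mem_gridInterval_of_lt (hzc.1 i trivial) (hzc'.1 i trivial) hi⟩⟩

theorem gridCellLowerFaces_subset_gridRegion_erase {T : Finset (GridIndex n N)}
    (hT : IsLowerSet (T : Set (GridIndex n N))) {c : GridIndex n N}
    (hc : c ∈ T) : gridCellLowerFaces N c ⊆ gridRegion N (T.erase c) := by
  have hmem : ∀ {z} c', c' < c → z ∈ gridCell N c' → z ∈ gridRegion N (T.erase c) :=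
    fun c' hc' hz =>
      Or.inr (mem_iUnion₂.2 ⟨c', Finset.mem_erase.2 ⟨hc'.ne, hT hc'.le hc⟩, hz⟩)
  rintro z ⟨hzc, ht | ⟨i, hi, hxi⟩⟩
  · rcases Nat.eq_zero_or_pos c.2 with h0 | h0
    · exact Or.inl (Subtype.ext (by rw [ht, h0]; simp))
    · obtain ⟨l, hl, hzl⟩ := exists_lt_mem_gridInterval h0 ht
      exact hmem (c.1, l) (Prod.mk_lt_mk_of_le_of_lt le_rfl hl) ⟨hzc.1, hzl⟩
  · obtain ⟨k, hk, hzk⟩ := exists_lt_mem_gridInterval hi hxi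
    refine hmem (Function.update c.1 i k, c.2)
      (Prod.mk_lt_mk_of_lt_of_le (update_lt_self_iff.2 hk) le_rfl) ⟨fun j _ => ?_, hzc.2⟩
    rcases eq_or_ne j i with rfl | hji
    · simpa using hzk
    · simpa [hji] using hzc.1 j trivial

theorem gridRegion_univ (hN : 0 < N) :
    gridRegion N (Finset.univ : Finset (GridIndex n N)) = univ := by
  refine eq_univ_of_forall fun z => Or.inr (mem_iUnion₂.2 ?_)
  choose k hk using fun i => exists_mem_gridInterval hN (z.1 i)
  obtain ⟨l, hl⟩ := exists_mem_gridInterval hN z.2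
  exact ⟨(k, l), Finset.mem_univ _, fun i _ => hk i, hl⟩

theorem exists_lift_on_gridRegion {q : E → B} {K : (Fin n → I) × I → B} (hK : Continuous K)
    {f : (Fin n → I) → E} (hf : Continuous f) (hK0 : ∀ x, K (x, 0) = q (f x))
    (hcell : ∀ c : GridIndex n N, ∃ V, MapsTo K (gridCell N c) V ∧
      RelLiftingProperty q V (gridCellLowerFaces N c) (gridCell N c))
    (T : Finset (GridIndex n N)) (hT : IsLowerSet (T : Set (GridIndex n N))) :
    ∃ F : (Fin n → I) × I → E, ContinuousOn F (gridRegion N T) ∧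
      (∀ x, F (x, 0) = f x) ∧ ∀ z ∈ gridRegion N T, q (F z) = K z := by
  induction T using Finset.strongInduction with
  | H T ih =>
  rcases T.eq_empty_or_nonempty with rfl | hne
  · refine ⟨fun z => f z.1, (hf.comp continuous_fst).continuousOn, fun x => rfl, ?_⟩
    rintro ⟨x, t⟩ (ht | hz)
    · rw [show t = 0 from ht, hK0]
    · simp at hz
  obtain ⟨c, hc⟩ := Finset.exists_maximal hne
  obtain ⟨F, hFc, hF0, hqF⟩ :=
    ih (T.erase c) (Finset.erase_ssubset hc.1) (hT.erase_maximal hc)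
  obtain ⟨V, hKV, hrel⟩ := hcell c
  obtain ⟨F', hF'c, hF'F, hqF'⟩ := hrel.exists_extend hK hKV (isClosed_gridCell c)
    (isClosed_gridRegion _) (gridCell_inter_gridRegion_erase_subset hc)
    (gridCellLowerFaces_subset_gridRegion_erase hT hc.1) hFc hqF
  rw [gridRegion_eq_erase_union hc.1]
  exact ⟨F', hF'c, fun x => (hF'F (Or.inl rfl)).trans (hF0 x), hqF'⟩

theorem exists_gridCell_subset {ι : Type*} {W : ι → Set ((Fin n → I) × I)}
    (hW : ∀ j, IsOpen (W j)) (hcov : ∀ z, ∃ j, z ∈ W j) :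
    ∃ N, 0 < N ∧ ∀ c : GridIndex n N, ∃ j, gridCell N c ⊆ W j := by
  obtain ⟨δ, hδ, hball⟩ :=
    lebesgue_number_lemma_of_metric isCompact_univ hW fun z _ => mem_iUnion.2 (hcov z)
  obtain ⟨m, hm⟩ := exists_nat_one_div_lt hδ
  refine ⟨m + 1, m.succ_pos, fun c => ?_⟩
  obtain ⟨j, hj⟩ := hball (gridCellEmbed (m + 1) c 0) (mem_univ _)
  refine ⟨j, fun z hz => hj (Metric.mem_ball.2 ?_)⟩
  calc dist z (gridCellEmbed (m + 1) c 0) ≤ 1 / ((m + 1 : ℕ) : ℝ) :=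
        dist_le_of_mem_gridCell hz (gridCellEmbed_mem c 0)
    _ < δ := by exact_mod_cast hm

theorem IsSerreFibration.of_isOpen_cover {ι : Type*} {q : E → B} {V : ι → Set B}
    (hV : ∀ j, IsOpen (V j)) (hcov : ∀ b, ∃ j, b ∈ V j)
    (hq : ∀ j, IsSerreFibration ((V j).restrictPreimage q)) : IsSerreFibration q := by
  intro n f K hf hK hK0
  obtain ⟨N, hN, hsmall⟩ := exists_gridCell_subset (W := fun j => K ⁻¹' V j)
    (fun j => (hV j).preimage hK) fun z => hcov (K z)
  have hcell (c : GridIndex n N) : ∃ V', MapsTo K (gridCell N c) V' ∧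
      RelLiftingProperty q V' (gridCellLowerFaces N c) (gridCell N c) := by
    obtain ⟨j, hj⟩ := hsmall c
    exact ⟨V j, hj, relLiftingProperty_gridCell (relLiftingProperty_lowerFaces (hq j) _)⟩
  obtain ⟨F, hFc, hF0, hqF⟩ := exists_lift_on_gridRegion hK hf hK0 hcell Finset.univ
    (by simpa using isLowerSet_univ)
  rw [gridRegion_univ hN] at hFc hqF
  exact ⟨F, continuousOn_univ.1 hFc, hF0, fun z => hqF z (mem_univ z)⟩

end GridCell

theorem IsSerreFibration.of_retract {E B E' B' : Type*} [TopologicalSpace E] [TopologicalSpace B]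
    [TopologicalSpace E'] [TopologicalSpace B'] {q : E → B} {q' : E' → B'}
    (hq : IsSerreFibration q) {i : E' → E} {r : E → E'} {j : B' → B} {s : B → B'}
    (hi : Continuous i) (hr : Continuous r) (hj : Continuous j) (hri : ∀ x, r (i x) = x)
    (hsj : ∀ y, s (j y) = y) (hqi : ∀ x, q (i x) = j (q' x)) (hqr : ∀ x, q' (r x) = s (q x)) :
    IsSerreFibration q' := by
  intro n f K hf hK hK0
  obtain ⟨L, hLc, hL0, hqL⟩ := hq n (i ∘ f) (j ∘ K) (hi.comp hf) (hj.comp hK)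
    fun x => by simp only [Function.comp_apply, hK0, hqi]
  exact ⟨r ∘ L, hr.comp hLc, fun x => by simp only [Function.comp_apply, hL0, hri],
    fun z => by simp only [Function.comp_apply, hqr, hqL, hsj]⟩

def fixedSetSubtypeHomeomorph (H : Subgroup G) {X : Type*} [TopologicalSpace X] [MulAction G X]
    (s : Set X) [GInvariantSet G s] :
    fixedSet G H s ≃ₜ ((↑) : fixedSet G H X → X) ⁻¹' s where
  toFun x := ⟨⟨x.1.1, fun h hh => congrArg Subtype.val (x.2 h hh)⟩, x.1.2⟩
  invFun y := ⟨⟨y.1.1, y.2⟩, fun h hh => Subtype.ext (y.1.2 h hh)⟩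
  left_inv _ := rfl
  right_inv _ := rfl
  continuous_toFun :=
    ((continuous_subtype_val.comp continuous_subtype_val).subtype_mk _).subtype_mk _
  continuous_invFun :=
    ((continuous_subtype_val.comp continuous_subtype_val).subtype_mk _).subtype_mk _

theorem statement8 {X Y : Type v}
    [TopologicalSpace X] [MulAction G X]
    [TopologicalSpace Y] [MulAction G Y]
    (C : Set (Subgroup G))
    (p : X → Y) (hp : IsGMap G p)
    {ι : Type v} (U : ι → Set Y)
    (hUopen : ∀ j, IsOpen (U j)) (hUcover : ∀ y, ∃ j, y ∈ U j)
    [∀ j, GInvariantSet G (U j)] [∀ j, GInvariantSet G (p ⁻¹' U j)]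
    (hloc : ∀ j, IsCFibration G C (fun x : (p ⁻¹' U j) => (⟨p x.1, x.2⟩ : U j))) :
    IsCFibration G C p := by
  refine ⟨hp, fun H hH => IsSerreFibration.of_isOpen_cover
    (fun j => (hUopen j).preimage continuous_subtype_val) (fun y => hUcover y) fun j => ?_⟩
  obtain ⟨_, hSerre⟩ := hloc j
  let eX := fixedSetSubtypeHomeomorph G H (p ⁻¹' U j)
  let eY := fixedSetSubtypeHomeomorph G H (U j)
  exact (hSerre H hH).of_retract
    (q' := (((↑) : fixedSet G H Y → Y) ⁻¹' U j).restrictPreimage _)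
    (i := eX.symm) (r := eX) (j := eY.symm) (s := eY) eX.symm.continuous eX.continuous
    eY.symm.continuous eX.apply_symm_apply eY.apply_symm_apply (fun _ => rfl) fun _ => rfl
end
end
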